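/- arXiv:2207.09757 — 2 statements merged into one kernel-verified Lean document; each statement's English description precedes it below -/
import Mathlib

section
/- Let $\gamma' \geq 0$ be a real number and let $i \geq 1$ be an integer. Define $L_{i0} = 1$ and, for $1 \le j \le i$, $L_{ij} = \binom{i}{j} \frac{\prod_{k=0}^{j-1}(i+\gamma'-k)}{\prod_{k=1}^{j}(k+\gamma')}$, and set $R_{ij} = \sum_{k=0}^{j} L_{ik}$ and $R_i = R_{ii}$. Then for every integer $0 \le r \le i-1$, $R_i - R_{ir} = R_{i(i-r-1)}$. -/
open Finset

/-- The regularizing coefficients `L_{ij}` (even-dimension case):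
`L_{i0} = 1` and for `j ≥ 1`,
`L_{ij} = binom(i,j) ⬝ (∏_{k=0}^{j-1} (i+γ'-k)) / (∏_{k=1}^{j} (k+γ'))`.
(For `j = 0` both products are empty, yielding `1`.) -/
noncomputable def Lcoef (γ : ℝ) (i j : ℕ) : ℝ :=
  (i.choose j : ℝ) * (∏ k ∈ Finset.range j, ((i : ℝ) + γ - (k : ℝ))) /
    ∏ k ∈ Finset.Icc 1 j, ((k : ℝ) + γ)

/-- The partial sums `R_{ij} = ∑_{k=0}^{j} L_{ik}`. -/
noncomputable def Rcoef (γ : ℝ) (i j : ℕ) : ℝ :=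
  ∑ k ∈ Finset.range (j + 1), Lcoef γ i k

lemma prod_key (γ : ℝ) (i : ℕ) : ∀ j, j ≤ i →
    (∏ k ∈ Finset.range j, ((i : ℝ) + γ - (k : ℝ))) *
      ∏ k ∈ Finset.Icc 1 (i - j), ((k : ℝ) + γ) =
    ∏ k ∈ Finset.Icc 1 i, ((k : ℝ) + γ) := by
  intro j
  induction j with
  | zero => simp
  | succ j ih =>
    intro hj
    have hj' : j ≤ i := by omega
    have h1 : i - j = (i - (j + 1)) + 1 := by omega
    have h3 : ((i - (j + 1) + 1 : ℕ) : ℝ) = (i : ℝ) - (j : ℝ) := by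
      rw [show i - (j + 1) + 1 = i - j from by omega]
      push_cast [hj']; ring
    rw [Finset.prod_range_succ, ← ih hj', h1,
      Finset.prod_Icc_succ_top (by omega), h3]
    ring

lemma Bpos (γ : ℝ) (hγ : 0 ≤ γ) (m : ℕ) :
    (0:ℝ) < ∏ k ∈ Finset.Icc 1 m, ((k : ℝ) + γ) := by
  apply Finset.prod_pos
  intro k hk
  simp only [Finset.mem_Icc] at hk
  have : (1:ℝ) ≤ (k:ℝ) := by exact_mod_cast hk.1
  linarith

lemma Lcoef_symm (γ : ℝ) (hγ : 0 ≤ γ) (i j : ℕ) (hj : j ≤ i) :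
    Lcoef γ i j = Lcoef γ i (i - j) := by
  unfold Lcoef
  rw [Nat.choose_symm hj]
  rw [div_eq_div_iff (ne_of_gt (Bpos γ hγ j)) (ne_of_gt (Bpos γ hγ (i - j)))]
  have k1 := prod_key γ i j hj
  have k2 := prod_key γ i (i - j) (Nat.sub_le i j)
  rw [Nat.sub_sub_self hj] at k2
  rw [mul_assoc, k1, mul_assoc, k2]

theorem Rcoef_diff_symm (γ : ℝ) (hγ : 0 ≤ γ) (i : ℕ) (hi : 1 ≤ i) :
    ∀ r : ℕ, r ≤ i - 1 → Rcoef γ i i - Rcoef γ i r = Rcoef γ i (i - r - 1) := by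
  intro r hr
  have hri : r + 1 ≤ i := by omega
  unfold Rcoef
  rw [← Finset.sum_Ico_eq_sub _ (by omega : r + 1 ≤ i + 1)]
  rw [Finset.sum_Ico_eq_sum_range]
  have hn : i + 1 - (r + 1) = i - r := by omega
  have hn2 : i - r - 1 + 1 = i - r := by omega
  rw [hn, hn2]
  rw [show (∑ k ∈ Finset.range (i - r), Lcoef γ i (r + 1 + k)) =
      ∑ k ∈ Finset.range (i - r), Lcoef γ i ((i - r) - 1 - k) from ?_]
  · exact Finset.sum_range_reflect (fun k => Lcoef γ i k) (i - r)
  · apply Finset.sum_congr rfl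
    intro k hk
    simp only [Finset.mem_range] at hk
    rw [Lcoef_symm γ hγ i (r + 1 + k) (by omega)]
    congr 1
    omega
end

section
/- Let $\gamma' \geq 0$ be a real number and let $i \geq 1$ be an integer. Define $L_{i0} = 1$ and, for $1 \le j \le i$, $L_{ij} = \binom{i}{j} \frac{\prod_{k=0}^{j-1}(i+\gamma'-k)}{\prod_{k=1}^{j}(k+\gamma')}$, set $R_{ij} = \sum_{k=0}^{j} L_{ik}$, $R_i = R_{ii}$, and for $0 \le r \le i-1$ define $F(i,r) = \dfrac{R_{ir}\,(R_i - R_{ir})}{(i-r)(i-r+\gamma')\,L_{ir}}$. Then for every integer $0 \le r \le i-1$, $F(i,r) = F(i,i-r-1)$. -/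
open Finset

/-- `F(i,r) = R_{ir}(R_i - R_{ir}) / ((i-r)(i-r+γ') L_{ir})`. -/
noncomputable def Fquot (γ : ℝ) (i r : ℕ) : ℝ :=
  Rcoef γ i r * (Rcoef γ i i - Rcoef γ i r) /
    (((i : ℝ) - (r : ℝ)) * ((i : ℝ) - (r : ℝ) + γ) * Lcoef γ i r)

/-! With `P n = ∏_{k=1}^{n} (k + γ')`, the coefficients have the closed form
`L_{ij} = C(i,j) P i / (P (i-j) P j)`, so `L_{ij} = L_{i,i-j}` and therefore
`R_{i,i-r-1} = R_i - R_{ir}`: the numerator of `F` is symmetric under `r ↦ i-r-1`.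
The denominators agree by the ratio recurrence
`(r+1)(r+1+γ') L_{i,r+1} = (i-r)(i-r+γ') L_{ir}` together with `L_{i,i-r-1} = L_{i,r+1}`. -/

noncomputable def shiftedFactorial (γ : ℝ) (n : ℕ) : ℝ :=
  ∏ k ∈ Icc 1 n, ((k : ℝ) + γ)

variable {γ : ℝ}

lemma shiftedFactorial_pos (hγ : 0 ≤ γ) (n : ℕ) : 0 < shiftedFactorial γ n :=
  prod_pos fun k hk => by
    have : (1 : ℝ) ≤ k := by exact_mod_cast (mem_Icc.mp hk).1
    linarith

lemma shiftedFactorial_succ (n : ℕ) :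
    shiftedFactorial γ (n + 1) = shiftedFactorial γ n * ((n : ℝ) + 1 + γ) := by
  rw [shiftedFactorial, prod_Icc_succ_top (by omega)]
  push_cast
  rfl

lemma shiftedFactorial_add (m j : ℕ) :
    shiftedFactorial γ (m + j) =
      shiftedFactorial γ m * ∏ k ∈ range j, (((m + j : ℕ) : ℝ) + γ - k) := by
  induction j with
  | zero => simp
  | succ j ih =>
    rw [← add_assoc, shiftedFactorial_succ, ih, prod_range_succ']
    push_cast
    ring_nf

lemma Lcoef_eq_of_add_eq (hγ : 0 ≤ γ) {i j m : ℕ} (h : m + j = i) :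
    Lcoef γ i j = (i.choose j : ℝ) * shiftedFactorial γ i /
      (shiftedFactorial γ m * shiftedFactorial γ j) := by
  subst h
  rw [Lcoef, shiftedFactorial_add m j, mul_left_comm,
    mul_div_mul_left _ _ (shiftedFactorial_pos hγ m).ne']
  rfl

lemma Lcoef_symm_of_add_eq (hγ : 0 ≤ γ) {i j m : ℕ} (h : m + j = i) :
    Lcoef γ i m = Lcoef γ i j := by
  subst h
  rw [Lcoef_eq_of_add_eq hγ (add_comm j m), Lcoef_eq_of_add_eq hγ rfl, Nat.choose_symm_add,
    mul_comm (shiftedFactorial γ j)]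

lemma Lcoef_succ_mul (hγ : 0 ≤ γ) {i r : ℕ} (hr : r < i) :
    ((r : ℝ) + 1) * ((r : ℝ) + 1 + γ) * Lcoef γ i (r + 1) =
      ((i : ℝ) - r) * ((i : ℝ) - r + γ) * Lcoef γ i r := by
  have hchoose : (i.choose (r + 1) : ℝ) * ((r : ℝ) + 1) = i.choose r * ((i : ℝ) - r) := by
    rw [← Nat.cast_sub hr.le]
    exact_mod_cast Nat.choose_succ_right_eq i r
  have hP := (shiftedFactorial_pos hγ r).ne'
  have hγr : (r : ℝ) + 1 + γ ≠ 0 := by positivity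
  rw [Lcoef, Lcoef, prod_range_succ]
  change _ * (_ / shiftedFactorial γ (r + 1)) = _ * (_ / shiftedFactorial γ r)
  rw [shiftedFactorial_succ]
  field_simp
  linear_combination ((i : ℝ) + γ - r) * (∏ k ∈ range r, ((i : ℝ) + γ - k)) * hchoose

lemma Rcoef_add_Rcoef_of_add_eq (hγ : 0 ≤ γ) {i r s : ℕ} (h : r + s + 1 = i) :
    Rcoef γ i r + Rcoef γ i s = Rcoef γ i i := by
  have hreflect : Rcoef γ i s = ∑ k ∈ range (s + 1), Lcoef γ i (r + 1 + k) := by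
    rw [Rcoef, ← sum_range_reflect]
    refine sum_congr rfl fun k hk => ?_
    have hk : k < s + 1 := mem_range.mp hk
    exact Lcoef_symm_of_add_eq hγ (by omega)
  rw [hreflect, Rcoef, Rcoef, ← sum_range_add, show r + 1 + (s + 1) = i + 1 by omega]

lemma Fquot_eq_of_add_eq (hγ : 0 ≤ γ) {i r s : ℕ} (h : r + s + 1 = i) :
    Fquot γ i r = Fquot γ i s := by
  have hR := Rcoef_add_Rcoef_of_add_eq hγ h
  have hRr : Rcoef γ i i - Rcoef γ i r = Rcoef γ i s := by linarith
  have hRs : Rcoef γ i i - Rcoef γ i s = Rcoef γ i r := by linarith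
  have hL : Lcoef γ i s = Lcoef γ i (r + 1) := Lcoef_symm_of_add_eq hγ (by omega)
  have hcast : (i : ℝ) - s = r + 1 := by rw [← h]; push_cast; ring
  rw [Fquot, Fquot, hRr, hRs, hL, hcast, Lcoef_succ_mul hγ (by omega), mul_comm (Rcoef γ i r)]

theorem Fquot_symm (γ : ℝ) (hγ : 0 ≤ γ) (i : ℕ) (hi : 1 ≤ i) :
    ∀ r : ℕ, r ≤ i - 1 → Fquot γ i r = Fquot γ i (i - r - 1) :=
  fun _ hr => Fquot_eq_of_add_eq hγ (by omega)
end
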